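/- arXiv:2302.06026 — 4 statements merged into one kernel-verified Lean document; each statement's English description precedes it below -/
import Mathlib

section
/- Let ρ > 1 be a real number and E = {ρ^n : n ∈ ℤ, n ≥ 0}. For any real numbers a₁, …, a_m and any positive real R, the set {a₁x₁ + ⋯ + a_m x_m : x₁, …, x_m ∈ E} ∩ (−R, R) is finite. -/
lemma pow_lt_finite {ρ : ℝ} (hρ : 1 < ρ) (C : ℝ) : {b : ℕ | ρ ^ b < C}.Finite := by
  obtain ⟨N, hN⟩ := pow_unbounded_of_one_lt C hρ
  apply Set.Finite.subset (Set.finite_Iio N)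
  intro b hb
  simp only [Set.mem_Iio]
  by_contra h
  push_neg at h
  exact absurd (hN.trans_le (pow_le_pow_right₀ hρ.le h)) (not_lt.mpr hb.le)

lemma key (ρ : ℝ) (hρ : 1 < ρ) :
    ∀ (k : ℕ) (c : Fin k → ℝ) (R : ℝ), 0 < R →
    ({y : ℝ | ∃ e : Fin k → ℕ, Monotone e ∧ y = ∑ i, c i * ρ ^ e i} ∩
      Set.Ioo (-R) R).Finite := by
  intro k
  induction k with
  | zero =>
    intro c R hR
    apply Set.Finite.subset (Set.finite_singleton 0)
    rintro y ⟨⟨e, he, rfl⟩, _⟩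
    simp
  | succ k ih =>
    intro c R hR
    have hρ0 : (0:ℝ) < ρ := lt_trans one_pos hρ
    set F : Set ℝ := (fun t => c 0 + t) ''
      ({y : ℝ | ∃ e : Fin k → ℕ, Monotone e ∧ y = ∑ i, (fun i => c i.succ) i * ρ ^ e i} ∩
        Set.Ioo (-(R + |c 0|)) (R + |c 0|)) with hFdef
    have hF : F.Finite := by
      apply Set.Finite.image
      exact ih (fun i => c i.succ) (R + |c 0|) (by positivity)
    have hGfin : ∀ q ∈ F, ({x : ℝ | ∃ b : ℕ, x = ρ ^ b * q} ∩ Set.Ioo (-R) R).Finite := by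
      intro q _
      rcases eq_or_ne q 0 with rfl | hq
      · apply Set.Finite.subset (Set.finite_singleton 0)
        rintro x ⟨⟨b, rfl⟩, _⟩
        simp
      · apply Set.Finite.subset (Set.Finite.image (fun b => ρ ^ b * q) (pow_lt_finite hρ (R / |q|)))
        rintro x ⟨⟨b, rfl⟩, hx1, hx2⟩
        refine ⟨b, ?_, rfl⟩
        have habs : |ρ ^ b * q| < R := abs_lt.mpr ⟨by linarith, hx2⟩
        rw [abs_mul, abs_pow, abs_of_pos hρ0] at habs
        rw [Set.mem_setOf_eq, lt_div_iff₀ (abs_pos.mpr hq)]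
        exact habs
    apply Set.Finite.subset (Set.Finite.biUnion hF hGfin)
    rintro y ⟨⟨e, he, rfl⟩, hy1, hy2⟩
    have hsum : ∑ i, c i * ρ ^ e i
        = c 0 * ρ ^ e 0 + ∑ i : Fin k, c i.succ * ρ ^ e i.succ := by
      rw [Fin.sum_univ_succ]
    set d : Fin k → ℕ := fun i => e i.succ - e 0 with hd
    have hle : ∀ i : Fin k, e 0 ≤ e i.succ := fun i => he (Fin.zero_le _)
    have hdmono : Monotone d := by
      intro i j hij
      exact Nat.sub_le_sub_right (he (Fin.succ_le_succ_iff.mpr hij)) _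
    set q : ℝ := c 0 + ∑ i : Fin k, c i.succ * ρ ^ d i with hqdef
    have hyq : ∑ i, c i * ρ ^ e i = ρ ^ e 0 * q := by
      rw [hsum, hqdef, mul_add, Finset.mul_sum]
      congr 1
      · ring
      · apply Finset.sum_congr rfl
        intro i _
        have : e i.succ = d i + e 0 := by
          have := hle i; simp only [hd]; omega
        rw [this, pow_add]
        ring
    have hpow1 : (1:ℝ) ≤ ρ ^ e 0 := one_le_pow₀ hρ.le
    have habsy : |∑ i, c i * ρ ^ e i| < R := abs_lt.mpr ⟨by linarith, hy2⟩
    have habsq : |q| < R := by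
      rw [hyq, abs_mul, abs_of_pos (lt_of_lt_of_le one_pos hpow1)] at habsy
      calc |q| = 1 * |q| := (one_mul _).symm
        _ ≤ ρ ^ e 0 * |q| := by
            apply mul_le_mul_of_nonneg_right hpow1 (abs_nonneg _)
        _ < R := habsy
    have hqF : q ∈ F := by
      refine ⟨∑ i : Fin k, c i.succ * ρ ^ d i, ⟨⟨d, hdmono, rfl⟩, ?_⟩, rfl⟩
      have h1 : |∑ i : Fin k, c i.succ * ρ ^ d i| < R + |c 0| := by
        have : ∑ i : Fin k, c i.succ * ρ ^ d i = q - c 0 := by rw [hqdef]; ring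
        rw [this]
        calc |q - c 0| ≤ |q| + |c 0| := abs_sub _ _
          _ < R + |c 0| := by linarith
      exact abs_lt.mp h1
    refine Set.mem_biUnion hqF ⟨⟨e 0, hyq⟩, hy1, hy2⟩

theorem stmt0 (ρ : ℝ) (hρ : 1 < ρ) (m : ℕ) (a : Fin m → ℝ) (R : ℝ) (hR : 0 < R) :
    ({y : ℝ | ∃ x : Fin m → ℝ, (∀ i, ∃ n : ℕ, x i = ρ ^ n) ∧ y = ∑ i, a i * x i} ∩
      Set.Ioo (-R) R).Finite := by
  have hU : ∀ σ : Equiv.Perm (Fin m),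
      ({y : ℝ | ∃ e : Fin m → ℕ, Monotone e ∧ y = ∑ i, a (σ i) * ρ ^ e i} ∩
        Set.Ioo (-R) R).Finite := fun σ => key ρ hρ m (fun i => a (σ i)) R hR
  apply Set.Finite.subset (Set.finite_iUnion hU)
  rintro y ⟨⟨x, hx, rfl⟩, hy⟩
  choose n hn using hx
  set σ := Tuple.sort n with hσ
  refine Set.mem_iUnion.mpr ⟨σ, ⟨⟨n ∘ σ, Tuple.monotone_sort n, ?_⟩, hy⟩⟩
  rw [← Equiv.sum_comp σ (fun i => a i * x i)]
  apply Finset.sum_congr rfl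
  intro i _
  rw [hn (σ i)]
  rfl
end

section
/- Let ρ > 1 be a real number and E = {ρ^n : n ∈ ℤ, n ≥ 0}. For any real numbers a₁, …, a_m, there exists r > 0 such that the only element of {a₁x₁ + ⋯ + a_m x_m : x₁, …, x_m ∈ E} lying in the interval (−r, r) is 0 (if 0 lies in the set at all). -/
open Finset

lemma finset_min_abs (F : Finset ℝ) : ∃ r > 0, ∀ v ∈ F, |v| < r → v = 0 := by
  classical
  induction F using Finset.induction_on with
  | empty => exact ⟨1, one_pos, by simp⟩
  | @insert b F' hx ih =>
    obtain ⟨r, hr, h⟩ := ih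
    by_cases hb : b = 0
    · refine ⟨r, hr, ?_⟩
      intro v hv hvr
      rcases Finset.mem_insert.1 hv with rfl | hv
      · exact hb
      · exact h v hv hvr
    · refine ⟨min r |b|, lt_min hr (abs_pos.2 hb), ?_⟩
      intro v hv hvr
      rcases Finset.mem_insert.1 hv with rfl | hv
      · exact absurd (lt_of_lt_of_le hvr (min_le_right _ _)) (lt_irrefl _)
      · exact h v hv (lt_of_lt_of_le hvr (min_le_left _ _))

lemma key_s1 (ρ : ℝ) (hρ : 1 < ρ) (M : ℕ) (a : Fin M → ℝ) (s : Finset (Fin M)) :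
    ∃ r > 0, ∀ n : Fin M → ℕ,
      |∑ i ∈ s, a i * ρ ^ (n i)| < r → ∑ i ∈ s, a i * ρ ^ (n i) = 0 := by
  classical
  induction s using Finset.strongInduction with
  | _ s ih =>
  rcases s.eq_empty_or_nonempty with rfl | hs
  · exact ⟨1, one_pos, by simp⟩
  have hρ0 : (0:ℝ) < ρ := lt_trans one_pos hρ
  have hρ1 : (1:ℝ) ≤ ρ := le_of_lt hρ
  -- r' : uniform bound over proper subsets
  set f : Finset (Fin M) → ℝ := fun t =>
    if h : t ⊂ s then Classical.choose (ih t h) else 1 with hfdef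
  have hf_pos : ∀ t, 0 < f t := by
    intro t
    rw [hfdef]
    dsimp only
    split
    · exact (Classical.choose_spec (ih t ‹_›)).1
    · exact one_pos
  have hf_spec : ∀ t (h : t ⊂ s), ∀ n : Fin M → ℕ,
      |∑ i ∈ t, a i * ρ ^ (n i)| < f t → ∑ i ∈ t, a i * ρ ^ (n i) = 0 := by
    intro t h
    have := (Classical.choose_spec (ih t h)).2
    rw [hfdef]
    dsimp only
    rw [dif_pos h]
    exact this
  have hpne : (s.powerset.image f).Nonempty :=
    ⟨f s, Finset.mem_image_of_mem f (Finset.mem_powerset_self s)⟩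
  set r' : ℝ := (s.powerset.image f).min' hpne with hr'def
  have hr'pos : 0 < r' := by
    obtain ⟨t, _, ht⟩ := Finset.mem_image.1 ((s.powerset.image f).min'_mem hpne)
    rw [hr'def, ← ht]; exact hf_pos t
  have hr'le : ∀ t, t ⊆ s → r' ≤ f t := by
    intro t ht
    exact Finset.min'_le _ _ (Finset.mem_image_of_mem f (Finset.mem_powerset.2 ht))
  -- total weight
  set A : ℝ := ∑ i ∈ s, |a i| with hAdef
  have hA0 : 0 ≤ A := Finset.sum_nonneg fun i _ => abs_nonneg _
  -- the gap g
  obtain ⟨g, hg⟩ := pow_unbounded_of_one_lt (2 * A / r') hρ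
  have hgA : 2 * A < r' * ρ ^ g := by
    rw [div_lt_iff₀ hr'pos] at hg; linarith
  set G : ℕ := M * g with hGdef
  -- finite set of bounded-exponent values
  set F : Finset ℝ :=
    Finset.image (fun d : Fin M → Fin (G+1) => ∑ i ∈ s, a i * ρ ^ ((d i : ℕ))) Finset.univ
    with hFdef
  obtain ⟨ε, hε, hF⟩ := finset_min_abs F
  refine ⟨min ε (r'/2), lt_min hε (by linarith), ?_⟩
  intro n hn
  set v : ℝ := ∑ i ∈ s, a i * ρ ^ (n i) with hvdef
  set N : ℕ := s.sup n with hNdef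
  have hNle : ∀ i ∈ s, n i ≤ N := fun i hi => Finset.le_sup hi
  obtain ⟨imax, himax, hNimax⟩ := Finset.exists_mem_eq_sup s hs n
  by_cases hcase : ∀ i ∈ s, N ≤ n i + G
  · -- bounded spread: v = ρ^b * w with w in finite set F
    set b : ℕ := N - G with hbdef
    have hble : ∀ i ∈ s, b ≤ n i := by
      intro i hi; have := hcase i hi; omega
    have hsub : ∀ i ∈ s, n i - b ≤ G := by
      intro i hi; have h1 := hNle i hi
      have h2 : N ≤ N - G + G := le_tsub_add
      omega
    set d : Fin M → Fin (G+1) := fun i => ⟨min (n i - b) G, Nat.lt_succ_of_le (min_le_right _ _)⟩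
      with hddef
    set w : ℝ := ∑ i ∈ s, a i * ρ ^ ((d i : ℕ)) with hwdef
    have hvw : v = ρ ^ b * w := by
      rw [hvdef, hwdef, Finset.mul_sum]
      refine Finset.sum_congr rfl fun i hi => ?_
      have : (d i : ℕ) = n i - b := by
        simp only [hddef]
        exact min_eq_left (hsub i hi)
      rw [this, ← mul_assoc, mul_comm (ρ ^ b), mul_assoc, ← pow_add,
        Nat.add_sub_cancel' (hble i hi)]
    have hwF : w ∈ F := Finset.mem_image_of_mem _ (Finset.mem_univ d)
    have hpb : (1:ℝ) ≤ ρ ^ b := one_le_pow₀ hρ1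
    have hwabs : |w| ≤ |v| := by
      rw [hvw, abs_mul, abs_of_pos (by positivity : (0:ℝ) < ρ ^ b)]
      nlinarith [abs_nonneg w]
    have hw0 : w = 0 := hF w hwF (lt_of_le_of_lt hwabs (lt_of_lt_of_le hn (min_le_left _ _)))
    rw [hvw, hw0, mul_zero]
  · push_neg at hcase
    obtain ⟨i0, hi0s, hi0⟩ := hcase
    -- pigeonhole to find a gap
    set S : ℕ → Finset (Fin M) := fun k => s.filter (fun i => N ≤ n i + k * g) with hSdef
    have hSmono : ∀ k, S k ⊆ S (k+1) := by
      intro k i hi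
      rw [hSdef] at *
      simp only [Finset.mem_filter] at *
      exact ⟨hi.1, by nlinarith [hi.2]⟩
    have hS0 : imax ∈ S 0 := by
      rw [hSdef]; simp only [Finset.mem_filter]
      exact ⟨himax, by omega⟩
    have hex : ∃ k < M, S k = S (k+1) := by
      by_contra hcon
      push_neg at hcon
      have hcard : ∀ k ≤ M, k + 1 ≤ (S k).card := by
        intro k hk
        induction k with
        | zero => exact Finset.card_pos.2 ⟨imax, hS0⟩
        | succ k ihk =>
          have h1 : k + 1 ≤ (S k).card := ihk (by omega)
          have h2 : S k ⊂ S (k+1) := ssubset_of_subset_of_ne (hSmono k) (hcon k (by omega))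
          have := Finset.card_lt_card h2
          omega
      have h3 := hcard M le_rfl
      have h4 : (S M).card ≤ M := by
        have h5 := Finset.card_le_card (Finset.subset_univ (S M))
        simpa using h5
      omega
    obtain ⟨k, hkM, hSk⟩ := hex
    set H : Finset (Fin M) := S (k+1) with hHdef
    have hHsub : H ⊆ s := Finset.filter_subset _ s
    have hi0H : i0 ∉ H := by
      rw [hHdef, hSdef]
      simp only [Finset.mem_filter, not_and]
      intro _
      have : (k+1) * g ≤ M * g := Nat.mul_le_mul_right g (by omega)
      omega
    have hHss : H ⊂ s := Finset.ssubset_iff_of_subset hHsub |>.2 ⟨i0, hi0s, hi0H⟩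
    have hHne : H.Nonempty := ⟨imax, hSk ▸ (by
      rw [hSdef]; simp only [Finset.mem_filter]; exact ⟨himax, by omega⟩ : imax ∈ S k)⟩
    have hkgN : k * g < N := by
      have : (k) * g ≤ M * g := Nat.mul_le_mul_right g (by omega)
      omega
    set b : ℕ := N - k * g with hbdef
    have hbH : ∀ i ∈ H, b ≤ n i := by
      intro i hi
      have : i ∈ S k := hSk ▸ hi
      rw [hSdef] at this
      simp only [Finset.mem_filter] at this
      omega
    have hbL : ∀ i ∈ s \ H, n i + g < b := by
      intro i hi
      rw [Finset.mem_sdiff] at hi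
      have : ¬ (N ≤ n i + (k+1) * g) := by
        intro hcontra
        exact hi.2 (by rw [hHdef, hSdef]; simp only [Finset.mem_filter]; exact ⟨hi.1, hcontra⟩)
      push_neg at this
      have h1 : (k+1) * g = k * g + g := by ring
      omega
    set w : ℝ := ∑ i ∈ H, a i * ρ ^ (n i - b) with hwdef
    have hvH : ∑ i ∈ H, a i * ρ ^ (n i) = ρ ^ b * w := by
      rw [hwdef, Finset.mul_sum]
      refine Finset.sum_congr rfl fun i hi => ?_
      rw [← mul_assoc, mul_comm (ρ ^ b), mul_assoc, ← pow_add,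
        Nat.add_sub_cancel' (hbH i hi)]
    set vL : ℝ := ∑ i ∈ s \ H, a i * ρ ^ (n i) with hvLdef
    have hsplit : vL + ρ ^ b * w = v := by
      rw [hvLdef, ← hvH, hvdef]
      exact Finset.sum_sdiff hHsub
    have hvLbound : |vL| * ρ ^ g ≤ A * ρ ^ b := by
      have h1 : |vL| ≤ ∑ i ∈ s \ H, |a i| * ρ ^ (n i) := by
        rw [hvLdef]
        refine (Finset.abs_sum_le_sum_abs _ _).trans (le_of_eq ?_)
        refine Finset.sum_congr rfl fun i hi => ?_
        rw [abs_mul, abs_of_pos (by positivity : (0:ℝ) < ρ ^ (n i))]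
      have h2 : (∑ i ∈ s \ H, |a i| * ρ ^ (n i)) * ρ ^ g ≤ ∑ i ∈ s \ H, |a i| * ρ ^ b := by
        rw [Finset.sum_mul]
        refine Finset.sum_le_sum fun i hi => ?_
        rw [mul_assoc, ← pow_add]
        refine mul_le_mul_of_nonneg_left ?_ (abs_nonneg _)
        exact pow_le_pow_right₀ hρ1 (le_of_lt (hbL i hi))
      have h3 : ∑ i ∈ s \ H, |a i| * ρ ^ b ≤ A * ρ ^ b := by
        rw [hAdef, Finset.sum_mul]
        refine Finset.sum_le_sum_of_subset_of_nonneg (Finset.sdiff_subset) fun i _ _ => ?_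
        positivity
      calc |vL| * ρ ^ g ≤ (∑ i ∈ s \ H, |a i| * ρ ^ (n i)) * ρ ^ g :=
            mul_le_mul_of_nonneg_right h1 (by positivity)
        _ ≤ _ := le_trans h2 h3
    have hpb : (1:ℝ) ≤ ρ ^ b := one_le_pow₀ hρ1
    have hpg : (0:ℝ) < ρ ^ g := by positivity
    have hw0 : w = 0 := by
      by_contra hw
      have hwr : f H ≤ |w| := by
        by_contra hwr
        push_neg at hwr
        exact hw (hf_spec H hHss (fun i => n i - b) hwr)
      have hr'w : r' ≤ |w| := le_trans (hr'le H hHsub) hwr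
      -- |v| ≥ ρ^b * |w| - |vL| ≥ ρ^b*(r' - A/ρ^g) ≥ r'/2, contradiction with |v| < r'/2
      have hvlow : ρ ^ b * |w| ≤ |v| + |vL| := by
        have : ρ ^ b * |w| = |ρ ^ b * w| := by
          rw [abs_mul, abs_of_pos (by positivity : (0:ℝ) < ρ ^ b)]
        have h5 : ρ ^ b * w = v - vL := by linarith [hsplit]
        rw [this, h5, sub_eq_add_neg]
        calc |v + -vL| ≤ |v| + |-vL| := abs_add_le _ _
          _ = |v| + |vL| := by rw [abs_neg]
      have hvsmall : |v| < r' / 2 := lt_of_lt_of_le hn (min_le_right _ _)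
      nlinarith [abs_nonneg vL, abs_nonneg w, mul_le_mul_of_nonneg_left hr'w (le_of_lt (by positivity : (0:ℝ) < ρ ^ b)),
        mul_pos (pow_pos hρ0 b) hpg]
    have hvvL : v = vL := by rw [← hsplit, hw0, mul_zero, add_zero]
    have hLss : s \ H ⊂ s := Finset.sdiff_ssubset hHsub hHne
    have : |vL| < f (s \ H) := by
      calc |vL| = |v| := by rw [hvvL]
        _ < min ε (r'/2) := hn
        _ ≤ r'/2 := min_le_right _ _
        _ < r' := by linarith
        _ ≤ f (s \ H) := hr'le _ (Finset.sdiff_subset)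
    rw [hvdef] at hvvL ⊢
    rw [hvvL]
    exact hf_spec (s \ H) hLss n this

theorem stmt1 (ρ : ℝ) (hρ : 1 < ρ) (m : ℕ) (a : Fin m → ℝ) :
    ∃ r > (0 : ℝ),
      {y : ℝ | ∃ x : Fin m → ℝ, (∀ i, ∃ n : ℕ, x i = ρ ^ n) ∧ y = ∑ i, a i * x i} ∩
        Set.Ioo (-r) r ⊆ {0} := by
  obtain ⟨r, hr, hkey⟩ := key_s1 ρ hρ m a Finset.univ
  refine ⟨r, hr, ?_⟩
  rintro y ⟨⟨x, hx, rfl⟩, hy2⟩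
  choose n hn using hx
  have hsum : ∑ i, a i * x i = ∑ i, a i * ρ ^ (n i) := by
    exact Finset.sum_congr rfl fun i _ => by rw [hn i]
  have habs : |∑ i, a i * ρ ^ (n i)| < r := by
    rw [← hsum]
    exact abs_lt.2 ⟨hy2.1, hy2.2⟩
  have := hkey n habs
  simp only [Set.mem_singleton_iff]
  rw [hsum, this]
end

section
/- Let p, q be coprime integers with q > 1 and ρ = p/q > 1. Then for any real r > 0 there is no infinite set F ⊆ {ρ^k : k ≥ 0} all of whose elements are congruent modulo rℤ. -/
theorem stmt6 (p q : ℤ) (hpq : IsCoprime p q) (hq : 1 < q) (ρ : ℝ) (hρdef : ρ = (p : ℝ) / q)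
    (hρ : 1 < ρ) (r : ℝ) (hr : 0 < r) :
    ¬ ∃ F : Set ℕ, F.Infinite ∧ ∀ m ∈ F, ∀ n ∈ F, ∃ k : ℤ, ρ ^ n - ρ ^ m = r * k := by
  rintro ⟨F, hFinf, hF⟩
  have hq0 : (q : ℝ) ≠ 0 := by positivity
  obtain ⟨m, hm⟩ := hFinf.nonempty
  obtain ⟨n, hn, hmn⟩ := hFinf.exists_gt m
  obtain ⟨k₁, hk₁⟩ := hF m hm n hn
  have hk₁0 : k₁ ≠ 0 := by
    intro h
    have : ρ ^ m < ρ ^ n := pow_lt_pow_right₀ hρ hmn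
    rw [h] at hk₁
    push_cast at hk₁
    linarith
  obtain ⟨n', hn', hnn'⟩ := hFinf.exists_gt (n + k₁.natAbs)
  have hnn : n < n' := lt_of_le_of_lt (Nat.le_add_right n k₁.natAbs) hnn'
  obtain ⟨k₂, hk₂⟩ := hF m hm n' hn'
  -- abbreviations
  set a := n - m with ha
  set b := n' - n with hb
  have hna : n = m + a := by omega
  have hn'b : n' = m + a + b := by omega
  -- real identity
  have hreal : (k₁ : ℝ) * ((p:ℝ)^(m+a+b) - (p:ℝ)^m * (q:ℝ)^(a+b))
      = (k₂ : ℝ) * ((p:ℝ)^(m+a) - (p:ℝ)^m * (q:ℝ)^a) * (q:ℝ)^b := by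
    have e1 : (k₁:ℝ) * (ρ ^ n' - ρ ^ m) = (k₂:ℝ) * (ρ ^ n - ρ ^ m) := by
      rw [hk₁, hk₂]; ring
    rw [hρdef, hna, hn'b] at e1
    obtain ⟨x, hx⟩ : ∃ x, x = (p:ℝ)/q := ⟨_, rfl⟩
    rw [← hx] at e1
    have hp : (p:ℝ) = x * q := by rw [hx]; field_simp
    rw [hp]
    linear_combination (q:ℝ)^(m+a+b) * e1
  have hint : k₁ * (p^(m+a+b) - p^m * q^(a+b)) = k₂ * (p^(m+a) - p^m * q^a) * q^b := by
    exact_mod_cast hreal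
  -- divisibility
  have hdvd : (q:ℤ)^b ∣ k₁ * (p^(m+a+b) - p^m * q^(a+b)) := by
    exact ⟨k₂ * (p^(m+a) - p^m * q^a), by rw [hint]; ring⟩
  have hcop : IsCoprime ((q:ℤ)^b) (p^(m+a+b) - p^m * q^(a+b)) := by
    have h1 : IsCoprime ((q:ℤ)^b) (p^(m+a+b)) := (hpq.symm.pow :)
    have : p^(m+a+b) - p^m * q^(a+b) = p^(m+a+b) + (q:ℤ)^b * (-(p^m * q^a)) := by
      rw [pow_add]; ring
    rw [this]
    exact h1.add_mul_left_right _
  have hdvdk : (q:ℤ)^b ∣ k₁ := hcop.dvd_of_dvd_mul_right hdvd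
  have hle : (q:ℤ)^b ≤ |k₁| := Int.le_of_dvd (abs_pos.mpr hk₁0) ((dvd_abs _ _).mpr hdvdk)
  have hbig : (k₁.natAbs : ℤ) < (q:ℤ)^b := by
    calc (k₁.natAbs : ℤ) < (2:ℤ)^b := by
          exact_mod_cast Nat.lt_of_lt_of_le (Nat.lt_two_pow_self (n := k₁.natAbs)) (Nat.pow_le_pow_right (by norm_num) (by omega))
      _ ≤ (q:ℤ)^b := pow_le_pow_left₀ (by norm_num) hq b
  rw [Int.abs_eq_natAbs] at hle
  omega
end

section
/- Let ρ > 1 be irrational and E = {ρ^n : n ≥ 0}. Let I be an infinite set of pairs (x, y) ∈ E × E with x < y such that y − x takes the same value z* for all pairs in I. Then the set J = {x/y : (x, y) ∈ I} is a countably infinite subset of {1 + t₁ − t₂ : t₁, t₂ ∈ E} ∩ [0, 1). -/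
theorem stmt10 (ρ : ℝ) (hρ : 1 < ρ) (hirr : Irrational ρ) (I : Set (ℝ × ℝ))
    (hI : I ⊆ {p : ℝ × ℝ | (∃ n : ℕ, p.1 = ρ ^ n) ∧ (∃ n : ℕ, p.2 = ρ ^ n) ∧ p.1 < p.2})
    (hinf : I.Infinite) (z : ℝ) (hz : ∀ p ∈ I, p.2 - p.1 = z) :
    ((fun p : ℝ × ℝ => p.1 / p.2) '' I).Countable ∧
      ((fun p : ℝ × ℝ => p.1 / p.2) '' I).Infinite ∧
      (fun p : ℝ × ℝ => p.1 / p.2) '' I ⊆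
        {w : ℝ | ∃ t₁ t₂ : ℝ, (∃ n : ℕ, t₁ = ρ ^ n) ∧ (∃ n : ℕ, t₂ = ρ ^ n) ∧
          w = 1 + t₁ - t₂} ∩ Set.Ico 0 1 := by
  have hρ0 : (0:ℝ) < ρ := lt_trans one_pos hρ
  have hpos : ∀ p ∈ I, 0 < p.1 ∧ 0 < p.2 := by
    intro p hp
    obtain ⟨⟨m, hm⟩, ⟨n, hn⟩, hlt⟩ := hI hp
    exact ⟨hm ▸ pow_pos hρ0 m, hn ▸ pow_pos hρ0 n⟩
  -- z is positive
  obtain ⟨p₀, hp₀⟩ := hinf.nonempty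
  have hz0 : 0 < z := (hz p₀ hp₀) ▸ sub_pos.2 (hI hp₀).2.2
  -- injectivity of the quotient map on I
  have hinj : Set.InjOn (fun p : ℝ × ℝ => p.1 / p.2) I := by
    intro p hp q hq h
    have hp2 : 0 < p.2 := (hpos p hp).2
    have hq2 : 0 < q.2 := (hpos q hq).2
    have h1 : p.1 = p.2 - z := by have := hz p hp; linarith
    have h2 : q.1 = q.2 - z := by have := hz q hq; linarith
    simp only at h
    rw [h1, h2, sub_div, sub_div, div_self hp2.ne', div_self hq2.ne'] at h
    have hdiv : z / p.2 = z / q.2 := by linarith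
    have hmul : z * q.2 = z * p.2 := by
      rw [div_eq_div_iff hp2.ne' hq2.ne'] at hdiv; exact hdiv
    have hy : p.2 = q.2 := (mul_left_cancel₀ hz0.ne' hmul).symm
    have hx : p.1 = q.1 := by rw [h1, h2, hy]
    exact Prod.ext hx hy
  -- countability of I
  have hIc : I.Countable := by
    have : I ⊆ (Set.range fun n : ℕ => ρ ^ n) ×ˢ (Set.range fun n : ℕ => ρ ^ n) := by
      intro p hp
      obtain ⟨⟨m, hm⟩, ⟨n, hn⟩, _⟩ := hI hp
      exact ⟨⟨m, hm.symm⟩, ⟨n, hn.symm⟩⟩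
    exact ((Set.countable_range _).prod (Set.countable_range _)).mono this
  refine ⟨hIc.image _, (hinf.image hinj), ?_⟩
  -- finiteness of bounded pieces of E
  have hEfin : ∀ c : ℝ, {x : ℝ | (∃ n : ℕ, x = ρ ^ n) ∧ x ≤ c}.Finite := by
    intro c
    obtain ⟨N, hN⟩ := pow_unbounded_of_one_lt c hρ
    apply Set.Finite.subset ((Set.finite_Iio N).image fun n => ρ ^ n)
    rintro x ⟨⟨n, rfl⟩, hxc⟩
    exact ⟨n, (pow_lt_pow_iff_right₀ hρ).1 (lt_of_le_of_lt hxc hN), rfl⟩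
  -- for each p ∈ I there is q ∈ I with q.1 > p.2
  have hbig : ∀ p ∈ I, ∃ q ∈ I, p.2 < q.1 := by
    intro p hp
    have hfin : {q ∈ I | q.1 ≤ p.2}.Finite := by
      have hinj1 : Set.InjOn (fun q : ℝ × ℝ => q.1) {q ∈ I | q.1 ≤ p.2} := by
        intro a ha b hb hab
        simp only at hab
        have h2 : a.2 = b.2 := by
          have := hz a ha.1; have := hz b hb.1; linarith [hab]
        exact Prod.ext hab h2
      apply Set.Finite.of_finite_image _ hinj1
      apply (hEfin p.2).subset
      rintro x ⟨q, ⟨hqI, hqle⟩, rfl⟩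
      exact ⟨(hI hqI).1, hqle⟩
    obtain ⟨q, hq⟩ := (hinf.diff hfin).nonempty
    refine ⟨q, hq.1, ?_⟩
    by_contra hle
    exact hq.2 ⟨hq.1, le_of_not_gt hle⟩
  rintro w ⟨p, hp, rfl⟩
  obtain ⟨q, hq, hpq⟩ := hbig p hp
  obtain ⟨⟨mp, hmp⟩, ⟨np, hnp⟩, hltp⟩ := hI hp
  obtain ⟨⟨mq, hmq⟩, ⟨nq, hnq⟩, hltq⟩ := hI hq
  have hp2 : 0 < p.2 := (hpos p hp).2
  have hnm : np < mq := by
    rw [← pow_lt_pow_iff_right₀ hρ, ← hnp, ← hmq]; exact hpq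
  have hnn : np < nq := by
    rw [← pow_lt_pow_iff_right₀ hρ, ← hnp, ← hnq]; exact lt_trans hpq hltq
  refine ⟨⟨ρ ^ (mq - np), ρ ^ (nq - np), ⟨_, rfl⟩, ⟨_, rfl⟩, ?_⟩, ?_, ?_⟩
  · have e1 : ρ ^ (mq - np) = q.1 / p.2 := by
      rw [pow_sub₀ ρ hρ0.ne' hnm.le, hmq, hnp, div_eq_mul_inv]
    have e2 : ρ ^ (nq - np) = q.2 / p.2 := by
      rw [pow_sub₀ ρ hρ0.ne' hnn.le, hnq, hnp, div_eq_mul_inv]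
    have hzp : p.2 - p.1 = z := hz p hp
    have hzq : q.2 - q.1 = z := hz q hq
    simp only
    rw [e1, e2]
    field_simp
    linarith
  · exact div_nonneg (hpos p hp).1.le hp2.le
  · exact (div_lt_one hp2).2 hltp
end
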